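/- arXiv:1705.05576 — 2 statements merged into one kernel-verified Lean document; each statement's English description precedes it below -/
import Mathlib

section
/- Let X be a complex Banach space, 1 ≤ p < ∞, and {M_k}_{k∈ℤ} a sequence of bounded linear operators on X. Then the following are equivalent: (i) for each f ∈ L^p(𝕋;X) there exists u ∈ H^{1,p}(𝕋;X) such that û(k) = M_k f̂(k) for all k ∈ ℤ (i.e. {M_k} is an (L^p, H^{1,p})-multiplier); (ii) {ik M_k}_{k∈ℤ} is an L^p-multiplier. -/
open MeasureTheory Real Complex Filter Finset intervalIntegral
open scoped ENNReal NNReal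

noncomputable section

/-- `f` represents an element of `L^p(𝕋; X)`: it is `2π`-periodic and
`p`-integrable over one period `(0, 2π]`. -/
def PeriodicLp {X : Type*} [NormedAddCommGroup X] (p : ℝ≥0∞) (f : ℝ → X) : Prop :=
  Function.Periodic f (2 * Real.pi) ∧
    MeasureTheory.MemLp f p (MeasureTheory.volume.restrict (Set.Ioc 0 (2 * Real.pi)))

/-- The `k`-th Fourier coefficient `f̂(k) = (1/(2π)) ∫₀^{2π} e^{-iks} f(s) ds`. -/
def fourierCoef {X : Type*} [NormedAddCommGroup X] [NormedSpace ℂ X] (f : ℝ → X) (k : ℤ) : X :=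
  (1 / (2 * (Real.pi : ℂ))) •
    ∫ s in (0:ℝ)..(2 * Real.pi), Complex.exp (-Complex.I * (k : ℂ) * (s : ℂ)) • f s

/-- A family `T ⊆ B(X, Y)` of bounded operators is `R`-bounded: there are `C > 0` and
`q ∈ [1, ∞)` such that for all `m`, all `T₁, …, T_m ∈ T` and `x₁, …, x_m ∈ X`,
`(2^{-m} Σ_{ε ∈ {-1,1}^m} ‖Σ_j ε_j T_j x_j‖^q)^{1/q} ≤
 C (2^{-m} Σ_{ε ∈ {-1,1}^m} ‖Σ_j ε_j x_j‖^q)^{1/q}`, where signs `ε ∈ {-1,1}^m` are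
encoded by maps `Fin m → Bool`. -/
def RBounded {X Y : Type*} [NormedAddCommGroup X] [NormedSpace ℂ X]
    [NormedAddCommGroup Y] [NormedSpace ℂ Y] (T : Set (X →L[ℂ] Y)) : Prop :=
  ∃ C q : ℝ, 0 < C ∧ 1 ≤ q ∧
    ∀ (m : ℕ) (Ts : Fin m → (X →L[ℂ] Y)) (x : Fin m → X), (∀ j, Ts j ∈ T) →
      (((2:ℝ)⁻¹) ^ m * ∑ ε : Fin m → Bool,
          ‖∑ j, (if ε j then (1:ℝ) else -1) • Ts j (x j)‖ ^ q) ^ (1/q) ≤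
      C * ((((2:ℝ)⁻¹) ^ m * ∑ ε : Fin m → Bool,
          ‖∑ j, (if ε j then (1:ℝ) else -1) • x j‖ ^ q) ^ (1/q))

/-- `{M_k}_{k ∈ ℤ}` is an `L^p`-multiplier: for each `f ∈ L^p(𝕋; X)` there is
`u ∈ L^p(𝕋; Y)` with `û(k) = M_k f̂(k)` for all `k`. -/
def IsLpMultiplier {X Y : Type*} [NormedAddCommGroup X] [NormedSpace ℂ X]
    [NormedAddCommGroup Y] [NormedSpace ℂ Y] (p : ℝ≥0∞) (M : ℤ → (X →L[ℂ] Y)) : Prop :=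
  ∀ f : ℝ → X, PeriodicLp p f →
    ∃ u : ℝ → Y, PeriodicLp p u ∧ ∀ k : ℤ, fourierCoef u k = M k (fourierCoef f k)

/-- `u` represents an element of `H^{1,p}(𝕋; X)`: `u ∈ L^p(𝕋; X)` and there is
`v ∈ L^p(𝕋; X)` with `v̂(k) = ik û(k)` for all `k`. -/
def MemH1p {X : Type*} [NormedAddCommGroup X] [NormedSpace ℂ X] (p : ℝ≥0∞) (u : ℝ → X) : Prop :=
  PeriodicLp p u ∧ ∃ v : ℝ → X, PeriodicLp p v ∧
    ∀ k : ℤ, fourierCoef v k = (Complex.I * (k : ℂ)) • fourierCoef u k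

/-- The (possibly unbounded) linear operator `A` with domain `D` is closed. -/
def IsClosedOp {X : Type*} [NormedAddCommGroup X] [NormedSpace ℂ X]
    (D : Submodule ℂ X) (A : D →ₗ[ℂ] X) : Prop :=
  ∀ (x : ℕ → D) (a b : X),
    Filter.Tendsto (fun m => (x m : X)) Filter.atTop (nhds a) →
    Filter.Tendsto (fun m => A (x m)) Filter.atTop (nhds b) →
    ∃ ha : a ∈ D, A ⟨a, ha⟩ = b

/-- `x` is a `2π`-periodic strong `L^p`-solution of
`x′(t) = A x(t) + Σ_{j=1}^n B x(t - r_j) + f(t)`, `x(0) = x(2π)`: it belongs to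
`H^{1,p}(𝕋; X)` (with `v` playing the role of `x′`), `x(t) ∈ D(A)` a.e. and the
equation holds almost everywhere on a period. -/
def IsStrongSolution {X : Type*} [NormedAddCommGroup X] [NormedSpace ℂ X]
    (p : ℝ≥0∞) (D : Submodule ℂ X) (A : D →ₗ[ℂ] X) (B : X →L[ℂ] X)
    {n : ℕ} (r : Fin n → ℝ) (f : ℝ → X) (x : ℝ → X) : Prop :=
  PeriodicLp p x ∧
  ∃ v : ℝ → X, PeriodicLp p v ∧
    (∀ k : ℤ, fourierCoef v k = (Complex.I * (k : ℂ)) • fourierCoef x k) ∧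
    ∀ᵐ t ∂(MeasureTheory.volume.restrict (Set.Ioc 0 (2 * Real.pi))),
      ∃ hx : x t ∈ D, v t = A ⟨x t, hx⟩ + (∑ j, B (x (t - r j))) + f t

/-! If `{ik M_k}` is an `L^p`-multiplier, the function `v` it produces from `f` has
`v̂(0) = 0`, i.e. mean zero, so its primitive `V(t) = ∫₀ᵗ v` is continuous and `2π`-periodic.
Fubini over the triangle `s ≤ t` gives `V̂(k) = (ik)⁻¹ v̂(k)` for `k ≠ 0`, and adding the
constant that corrects the zeroth coefficient yields `u ∈ H^{1,p}` with `û(k) = M_k f̂(k)`.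
Conversely, the `v` witnessing `u ∈ H^{1,p}` realises `{ik M_k}` on `f`. -/

theorem intervalIntegral_smul_primitive_eq {E : Type*} [NormedAddCommGroup E]
    [NormedSpace ℂ E] [CompleteSpace E] {g : ℝ → ℂ} {v : ℝ → E} {a b : ℝ} (hab : a ≤ b)
    (hg : IntervalIntegrable g volume a b) (hv : IntervalIntegrable v volume a b) :
    ∫ t in a..b, g t • ∫ s in a..t, v s = ∫ s in a..b, (∫ t in s..b, g t) • v s := by
  set ν := volume.restrict (Set.Ioc a b)
  set F : ℝ × ℝ → E := {z | z.2 ≤ z.1}.indicator fun z => g z.1 • v z.2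
  have hF : Integrable F (ν.prod ν) :=
    (hg.1.smul_prod hv.1).indicator (measurableSet_le measurable_snd measurable_fst)
  have inner_left : ∀ t ∈ Set.Ioc a b, ∫ s, F (t, s) ∂ν = g t • ∫ s in a..t, v s := by
    intro t ht
    have : (fun s => F (t, s)) = (Set.Iic t).indicator fun s => g t • v s := by
      ext s; by_cases hs : s ≤ t <;> simp [F, hs]
    rw [this, MeasureTheory.integral_indicator measurableSet_Iic,
      Measure.restrict_restrict measurableSet_Iic, Set.Iic_inter_Ioc_of_le ht.2,
      MeasureTheory.integral_smul, integral_of_le ht.1.le]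
  have inner_right : ∀ s ∈ Set.Ioc a b, ∫ t, F (t, s) ∂ν = (∫ t in s..b, g t) • v s := by
    intro s hs
    have : (fun t => F (t, s)) = (Set.Ici s).indicator fun t => g t • v s := by
      ext t; by_cases ht : s ≤ t <;> simp [F, ht]
    rw [this, MeasureTheory.integral_indicator measurableSet_Ici,
      Measure.restrict_restrict measurableSet_Ici, _root_.integral_smul_const,
      integral_of_le hs.2, show Set.Ici s ∩ Set.Ioc a b = Set.Icc s b by grind,
      integral_Icc_eq_integral_Ioc]
  calc ∫ t in a..b, g t • ∫ s in a..t, v s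
      = ∫ t, ∫ s, F (t, s) ∂ν ∂ν := by
        rw [integral_of_le hab]
        exact setIntegral_congr_fun measurableSet_Ioc fun t ht => (inner_left t ht).symm
    _ = ∫ s, ∫ t, F (t, s) ∂ν ∂ν := integral_integral_swap hF
    _ = ∫ s in a..b, (∫ t in s..b, g t) • v s := by
        rw [integral_of_le hab]
        exact setIntegral_congr_fun measurableSet_Ioc inner_right

theorem Function.Periodic.periodic_primitive {E : Type*} [NormedAddCommGroup E]
    [NormedSpace ℝ E] {f : ℝ → E} {T : ℝ} (hf : Function.Periodic f T) (hT : T ≠ 0)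
    (hfi : IntervalIntegrable f volume 0 T) (hf0 : ∫ x in 0..T, f x = 0) :
    Function.Periodic (fun t => ∫ x in 0..t, f x) T := fun t => by
  dsimp only
  rw [hf.intervalIntegral_add_eq_add 0 t (hf.intervalIntegrable₀ hT hfi), zero_add, hf0,
    add_zero]

theorem Continuous.memLp_restrict_Ioc {E : Type*} [NormedAddCommGroup E] {f : ℝ → E}
    (hf : Continuous f) (p : ℝ≥0∞) (a b : ℝ) : MemLp f p (volume.restrict (Set.Ioc a b)) := by
  obtain ⟨C, hC⟩ :=
    isCompact_Icc.exists_bound_of_continuousOn (hf.continuousOn (s := Set.Icc a b))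
  refine .of_bound hf.aestronglyMeasurable.restrict C ?_
  exact (ae_restrict_iff' measurableSet_Ioc).2
    (.of_forall fun t ht => hC t (Set.Ioc_subset_Icc_self ht))

theorem I_mul_intCast_ne_zero {k : ℤ} (hk : k ≠ 0) : Complex.I * k ≠ 0 :=
  mul_ne_zero Complex.I_ne_zero (Int.cast_ne_zero.2 hk)

theorem exp_neg_I_mul_intCast_mul_two_pi (k : ℤ) :
    Complex.exp (-Complex.I * k * ((2 * π : ℝ) : ℂ)) = 1 := by
  rw [show -Complex.I * k * ((2 * π : ℝ) : ℂ) = ((-k : ℤ) : ℂ) * (2 * π * Complex.I) by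
    push_cast; ring]
  exact Complex.exp_int_mul_two_pi_mul_I (-k)

theorem integral_exp_neg_I_mul_intCast {k : ℤ} (hk : k ≠ 0) (s : ℝ) :
    ∫ t in s..2 * π, Complex.exp (-Complex.I * k * t) =
      (Complex.exp (-Complex.I * k * s) - 1) / (Complex.I * k) := by
  rw [integral_exp_mul_complex (neg_mul Complex.I k ▸ neg_ne_zero.2 (I_mul_intCast_ne_zero hk)),
    exp_neg_I_mul_intCast_mul_two_pi, neg_mul, div_neg, ← neg_div, neg_sub]

section FourierCoef

variable {X : Type*} [NormedAddCommGroup X] [NormedSpace ℂ X]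

theorem fourierCoef_zero (f : ℝ → X) :
    fourierCoef f 0 = (1 / (2 * (π : ℂ))) • ∫ s in 0..2 * π, f s := by
  simp [fourierCoef]

theorem fourierCoef_add {f g : ℝ → X} (hf : IntervalIntegrable f volume 0 (2 * π))
    (hg : IntervalIntegrable g volume 0 (2 * π)) (k : ℤ) :
    fourierCoef (f + g) k = fourierCoef f k + fourierCoef g k := by
  have he : Continuous fun t : ℝ => Complex.exp (-Complex.I * k * t) := by fun_prop
  simp only [fourierCoef, Pi.add_apply, smul_add]
  rw [integral_add (hf.continuousOn_smul he.continuousOn) (hg.continuousOn_smul he.continuousOn),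
    smul_add]

variable [CompleteSpace X]

theorem fourierCoef_const (x : X) (k : ℤ) :
    fourierCoef (fun _ => x) k = if k = 0 then x else 0 := by
  split_ifs with hk
  · rw [hk, fourierCoef_zero, intervalIntegral.integral_const, sub_zero, ← Complex.coe_smul,
      smul_smul, Complex.ofReal_mul, Complex.ofReal_ofNat,
      one_div_mul_cancel (by exact_mod_cast two_pi_pos.ne'), one_smul]
  · rw [fourierCoef, intervalIntegral.integral_smul_const, integral_exp_neg_I_mul_intCast hk]
    simp

theorem fourierCoef_primitive {v : ℝ → X} (hv : IntervalIntegrable v volume 0 (2 * π))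
    {k : ℤ} (hk : k ≠ 0) :
    fourierCoef (fun t => ∫ s in 0..t, v s) k =
      (Complex.I * k)⁻¹ • (fourierCoef v k - fourierCoef v 0) := by
  have he : Continuous fun t : ℝ => Complex.exp (-Complex.I * k * t) := by fun_prop
  have key : ∫ t in 0..2 * π, Complex.exp (-Complex.I * k * t) • ∫ s in 0..t, v s =
      (Complex.I * k)⁻¹ •
        ((∫ s in 0..2 * π, Complex.exp (-Complex.I * k * s) • v s) - ∫ s in 0..2 * π, v s) := by
    rw [intervalIntegral_smul_primitive_eq two_pi_pos.le (he.intervalIntegrable _ _) hv,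
      ← integral_sub (hv.continuousOn_smul he.continuousOn) hv, ← intervalIntegral.integral_smul]
    congr 1 with s
    rw [integral_exp_neg_I_mul_intCast hk, div_eq_inv_mul, mul_smul, sub_smul, one_smul]
  rw [fourierCoef, key, fourierCoef_zero, fourierCoef, smul_comm, smul_sub]

end FourierCoef

theorem exists_periodicLp_antideriv_of_fourierCoef_zero {X : Type*} [NormedAddCommGroup X]
    [NormedSpace ℂ X] [CompleteSpace X] {p : ℝ≥0∞} (hp : 1 ≤ p) {v : ℝ → X}
    (hv : PeriodicLp p v) (hv0 : fourierCoef v 0 = 0) (x : X) :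
    ∃ u : ℝ → X, PeriodicLp p u ∧ fourierCoef u 0 = x ∧
      ∀ k : ℤ, fourierCoef v k = (Complex.I * k) • fourierCoef u k := by
  have hvi : IntervalIntegrable v volume 0 (2 * π) :=
    (intervalIntegrable_iff_integrableOn_Ioc_of_le two_pi_pos.le).2 (hv.2.integrable hp)
  have hv_mean : ∫ s in 0..2 * π, v s = 0 := by
    rw [fourierCoef_zero, smul_eq_zero] at hv0
    exact hv0.resolve_left (by simp [Real.pi_ne_zero])
  set V : ℝ → X := fun t => ∫ s in 0..t, v s
  have hV : Continuous V :=
    intervalIntegral.continuous_primitive (hv.1.intervalIntegrable₀ two_pi_pos.ne' hvi) 0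
  set u := V + fun _ => x - fourierCoef V 0
  have hu : ∀ k, fourierCoef u k = fourierCoef V k + if k = 0 then x - fourierCoef V 0 else 0 :=
    fun k => by
      rw [fourierCoef_add (hV.intervalIntegrable _ _) intervalIntegrable_const, fourierCoef_const]
  refine ⟨u, ⟨(hv.1.periodic_primitive two_pi_pos.ne' hvi hv_mean).add (by simp),
    (hV.add continuous_const).memLp_restrict_Ioc p _ _⟩, by simp [hu], fun k => ?_⟩
  rcases eq_or_ne k 0 with rfl | hk
  · simp [hv0]
  · rw [hu, if_neg hk, add_zero, fourierCoef_primitive hvi hk, hv0, sub_zero,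
      smul_inv_smul₀ (I_mul_intCast_ne_zero hk)]

theorem h1p_multiplier_iff_general {X : Type*}
    [NormedAddCommGroup X] [NormedSpace ℂ X] [CompleteSpace X]
    (p : ℝ≥0∞) (hp1 : 1 ≤ p)
    (M : ℤ → (X →L[ℂ] X)) :
    (∀ f : ℝ → X, PeriodicLp p f →
      ∃ u : ℝ → X, MemH1p p u ∧ ∀ k : ℤ, fourierCoef u k = M k (fourierCoef f k)) ↔
    IsLpMultiplier p (fun k : ℤ => (Complex.I * (k : ℂ)) • M k) := by
  constructor
  · intro H f hf
    obtain ⟨u, ⟨-, v, hv, hvu⟩, huf⟩ := H f hf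
    exact ⟨v, hv, fun k => by simp [hvu k, huf k]⟩
  · intro H f hf
    obtain ⟨v, hv, hvf⟩ := H f hf
    obtain ⟨u, hu, hu0, hvu⟩ := exists_periodicLp_antideriv_of_fourierCoef_zero hp1 hv
      (by simp [hvf 0]) (M 0 (fourierCoef f 0))
    refine ⟨u, ⟨hu, v, hv, hvu⟩, fun k => ?_⟩
    rcases eq_or_ne k 0 with rfl | hk
    · exact hu0
    · apply smul_right_injective X (I_mul_intCast_ne_zero hk)
      simpa [hvu k] using hvf k

/-- For a sequence `{M_k}_{k∈ℤ} ⊆ B(X)` and `1 ≤ p < ∞`: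
`{M_k}` is an `(L^p, H^{1,p})`-multiplier iff `{ik M_k}` is an `L^p`-multiplier. -/
theorem h1p_multiplier_iff {X : Type*}
    [NormedAddCommGroup X] [NormedSpace ℂ X] [CompleteSpace X]
    (p : ℝ≥0∞) (hp1 : 1 ≤ p) (hp2 : p < ⊤)
    (M : ℤ → (X →L[ℂ] X)) :
    (∀ f : ℝ → X, PeriodicLp p f →
      ∃ u : ℝ → X, MemH1p p u ∧ ∀ k : ℤ, fourierCoef u k = M k (fourierCoef f k)) ↔
    IsLpMultiplier p (fun k : ℤ => (Complex.I * (k : ℂ)) • M k) :=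
  h1p_multiplier_iff_general p hp1 M

end
end

section
/- Let X be a complex Banach space, 1 ≤ p < ∞, A a closed linear operator on X with domain D(A), B a bounded linear operator on X, and r_1,…,r_n real numbers. Suppose that for every f ∈ L^p(𝕋;X) there exists a unique 2π-periodic strong L^p-solution of Eq. (1). Then for every k ∈ ℤ the operator Δ_k = ikI − A − Σ_{j=1}^n e^{−ikr_j} B : D(A) → X is bijective and has a bounded inverse. -/
open MeasureTheory Real Complex Filter Finset intervalIntegral
open scoped ENNReal NNReal

noncomputable section

/-!
Test Eq. (1) against a single Fourier mode. For `y ∈ D(A)` the function `t ↦ e^{ikt} y` is a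
strong solution with forcing `t ↦ e^{ikt} Δ_k y`, so uniqueness of solutions makes `Δ_k`
injective. Conversely, let `x` solve Eq. (1) with forcing `t ↦ e^{ikt} z`. Taking the `k`-th
Fourier coefficient commutes with `B`, turns the delay `x(· - r_j)` into the factor `e^{-ikr_j}`,
and commutes with the closed operator `A` because the graph of `A` is a closed subspace containing
`(x(t), Ax(t))` for almost every `t`; hence `x̂(k) ∈ D(A)` and `Δ_k x̂(k) = z`. Finally `Δ_k` is a
bounded perturbation of `-A`, hence closed, so its inverse is bounded by the closed graph theorem.
-/

open Function

local notation "μT" => MeasureTheory.volume.restrict (Set.Ioc (0 : ℝ) (2 * π))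

lemma periodic_exp_I_int_mul (k : ℤ) :
    Periodic (fun t : ℝ => Complex.exp (I * k * t)) (2 * π) := by
  intro t
  dsimp only
  rw [show I * k * ((t + 2 * π : ℝ) : ℂ) = I * k * t + k * (2 * π * I) by push_cast; ring,
    Complex.exp_add, Complex.exp_int_mul_two_pi_mul_I, mul_one]

lemma periodic_exp_neg_I_int_mul (k : ℤ) :
    Periodic (fun t : ℝ => Complex.exp (-I * k * t)) (2 * π) := by
  simpa using periodic_exp_I_int_mul (-k)

lemma integral_exp_I_int_mul (j : ℤ) :
    ∫ s in (0 : ℝ)..2 * π, Complex.exp (I * j * s) = if j = 0 then 2 * π else 0 := by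
  split_ifs with hj
  · simp [hj]
  · rw [integral_exp_mul_complex (mul_ne_zero I_ne_zero (by exact_mod_cast hj)),
      show I * j * ((2 * π : ℝ) : ℂ) = j * (2 * π * I) by push_cast; ring,
      Complex.exp_int_mul_two_pi_mul_I]
    simp

section FourierCoefficients

variable {E F : Type*} [NormedAddCommGroup E] [NormedAddCommGroup F]

lemma PeriodicLp.intervalIntegrable {p : ℝ≥0∞} {f : ℝ → E} (hf : PeriodicLp p f) (hp : 1 ≤ p)
    (a b : ℝ) : IntervalIntegrable f volume a b :=
  hf.1.intervalIntegrable₀ two_pi_pos.ne'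
    ((intervalIntegrable_iff_integrableOn_Ioc_of_le two_pi_pos.le).2 (hf.2.integrable hp)) a b

variable [NormedSpace ℂ E] [NormedSpace ℂ F]

lemma periodicLp_exp_smul (p : ℝ≥0∞) (k : ℤ) (z : E) :
    PeriodicLp p (fun t : ℝ => Complex.exp (I * k * t) • z) := by
  refine ⟨fun t => by simp only [periodic_exp_I_int_mul k t], ?_⟩
  refine MemLp.of_bound (by fun_prop : Continuous _).aestronglyMeasurable ‖z‖
    (.of_forall fun t => ?_)
  simp [norm_smul, Complex.norm_exp]

lemma IntervalIntegrable.exp_smul {f : ℝ → E} (hf : IntervalIntegrable f volume 0 (2 * π))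
    (k : ℤ) :
    IntervalIntegrable (fun s : ℝ => Complex.exp (-I * k * s) • f s) volume 0 (2 * π) :=
  hf.continuousOn_smul (by fun_prop)

lemma fourierCoef_sub {f g : ℝ → E} (hf : IntervalIntegrable f volume 0 (2 * π))
    (hg : IntervalIntegrable g volume 0 (2 * π)) (k : ℤ) :
    fourierCoef (fun t => f t - g t) k = fourierCoef f k - fourierCoef g k := by
  simp only [fourierCoef, smul_sub,
    intervalIntegral.integral_sub (hf.exp_smul k) (hg.exp_smul k)]

lemma fourierCoef_sum {ι : Type*} (s : Finset ι) {f : ι → ℝ → E}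
    (hf : ∀ i ∈ s, IntervalIntegrable (f i) volume 0 (2 * π)) (k : ℤ) :
    fourierCoef (fun t => ∑ i ∈ s, f i t) k = ∑ i ∈ s, fourierCoef (f i) k := by
  simp only [fourierCoef, Finset.smul_sum,
    intervalIntegral.integral_finsetSum fun i hi => (hf i hi).exp_smul k]

lemma ContinuousLinearMap.fourierCoef_comp_comm [CompleteSpace E] [CompleteSpace F]
    (L : E →L[ℂ] F) {f : ℝ → E} (hf : IntervalIntegrable f volume 0 (2 * π)) (k : ℤ) :
    fourierCoef (fun t => L (f t)) k = L (fourierCoef f k) := by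
  simp only [fourierCoef, L.map_smul, ← L.intervalIntegral_comp_comm (hf.exp_smul k)]

lemma Function.Periodic.fourierCoef_comp_sub {f : ℝ → E} (hf : Periodic f (2 * π)) (r : ℝ)
    (k : ℤ) :
    fourierCoef (fun t => f (t - r)) k = Complex.exp (-I * k * r) • fourierCoef f k := by
  have hshift : ∀ u : ℝ, Complex.exp (-I * k * ((u + r : ℝ) : ℂ)) • f u
      = Complex.exp (-I * k * r) • Complex.exp (-I * k * u) • f u := fun u => by
    rw [smul_smul, ← Complex.exp_add]
    push_cast
    ring_nf
  have hper : Periodic (fun u : ℝ => Complex.exp (-I * k * u) • f u) (2 * π) := fun u => by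
    simp only [periodic_exp_neg_I_int_mul k u, hf u]
  have hintegral : ∫ s in (0 : ℝ)..2 * π, Complex.exp (-I * k * s) • f (s - r)
      = Complex.exp (-I * k * r) • ∫ s in (0 : ℝ)..2 * π, Complex.exp (-I * k * s) • f s :=
    calc _ = ∫ u in 0 - r..2 * π - r, Complex.exp (-I * k * ((u + r : ℝ) : ℂ)) • f u := by
          rw [← intervalIntegral.integral_comp_sub_right]
          simp only [sub_add_cancel]
      _ = Complex.exp (-I * k * r) • ∫ u in -r..-r + 2 * π, Complex.exp (-I * k * u) • f u := by
          rw [zero_sub, sub_eq_neg_add]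
          simp only [hshift, intervalIntegral.integral_smul]
      _ = _ := by rw [hper.intervalIntegral_add_eq (-r) 0, zero_add]
  rw [fourierCoef, fourierCoef, hintegral, smul_comm]

lemma fourierCoef_exp_smul [CompleteSpace E] (k m : ℤ) (z : E) :
    fourierCoef (fun t : ℝ => Complex.exp (I * k * t) • z) m = if m = k then z else 0 := by
  have hexp : ∀ s : ℝ, Complex.exp (-I * m * s) • Complex.exp (I * k * s) • z
      = Complex.exp (I * (k - m : ℤ) * s) • z := fun s => by
    rw [smul_smul, ← Complex.exp_add]
    push_cast
    ring_nf
  rw [fourierCoef]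
  simp only [hexp]
  rw [intervalIntegral.integral_smul_const, integral_exp_I_int_mul]
  simp only [sub_eq_zero, eq_comm (a := k)]
  split_ifs
  · rw [smul_smul, one_div]
    push_cast
    rw [inv_mul_cancel₀ (by simp [Real.pi_ne_zero]), one_smul]
  · simp

lemma fourierCoef_mem_of_isClosed [CompleteSpace E] {G : Submodule ℂ E}
    (hG : IsClosed (G : Set E)) {f : ℝ → E} (hf : IntervalIntegrable f volume 0 (2 * π))
    (hfG : ∀ᵐ t ∂μT, f t ∈ G) (k : ℤ) :
    fourierCoef f k ∈ G := by
  have hpos : volume.real (Set.Ioc 0 (2 * π)) ≠ 0 := by simp [Real.pi_pos.le, Real.pi_ne_zero]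
  have havg : (⨍ t in Set.Ioc 0 (2 * π), Complex.exp (-I * k * t) • f t) ∈ G :=
    (G.restrictScalars ℝ).convex.set_average_mem hG (by simp [Real.pi_pos]) measure_Ioc_lt_top.ne
      (hfG.mono fun t ht => G.smul_mem _ ht)
      ((intervalIntegrable_iff_integrableOn_Ioc_of_le two_pi_pos.le).1 (hf.exp_smul k))
  rw [setAverage_eq] at havg
  have hint := (G.restrictScalars ℝ).smul_mem (volume.real (Set.Ioc 0 (2 * π))) havg
  rw [smul_inv_smul₀ hpos, ← intervalIntegral.integral_of_le two_pi_pos.le] at hint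
  exact G.smul_mem _ hint

end FourierCoefficients

section ClosedOperators

variable {X : Type*} [NormedAddCommGroup X] [NormedSpace ℂ X] {D : Submodule ℂ X}
  {A : D →ₗ[ℂ] X}

lemma IsClosedOp.isClosed_graph (hA : IsClosedOp D A) :
    IsClosed (LinearMap.range (D.subtype.prod A) : Set (X × X)) := by
  refine IsSeqClosed.isClosed fun u q hu hlim => ?_
  choose y hy using hu
  obtain rfl : u = fun m => ((y m : X), A (y m)) := funext fun m => (hy m).symm
  obtain ⟨hq, hAq⟩ := hA y q.1 q.2 ((continuous_fst.tendsto q).comp hlim)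
    ((continuous_snd.tendsto q).comp hlim)
  exact ⟨⟨q.1, hq⟩, Prod.ext rfl hAq⟩

lemma IsClosedOp.fourierCoef_mem [CompleteSpace X] (hA : IsClosedOp D A) {x g : ℝ → X}
    (hx : IntervalIntegrable x volume 0 (2 * π)) (hg : IntervalIntegrable g volume 0 (2 * π))
    (hxg : ∀ᵐ t ∂μT, ∃ h : x t ∈ D, A ⟨x t, h⟩ = g t) (k : ℤ) :
    ∃ h : fourierCoef x k ∈ D, A ⟨fourierCoef x k, h⟩ = fourierCoef g k := by
  have hpair : IntervalIntegrable (fun t => (x t, g t)) volume 0 (2 * π) :=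
    ⟨Integrable.prodMk hx.1 hg.1, Integrable.prodMk hx.2 hg.2⟩
  obtain ⟨y, hy⟩ := fourierCoef_mem_of_isClosed hA.isClosed_graph hpair
    (hxg.mono fun t ⟨h, hAt⟩ => ⟨⟨x t, h⟩, Prod.ext rfl hAt⟩) k
  have hfst := (ContinuousLinearMap.fst ℂ X X).fourierCoef_comp_comm hpair k
  have hsnd := (ContinuousLinearMap.snd ℂ X X).fourierCoef_comp_comm hpair k
  simp only [ContinuousLinearMap.coe_fst', ContinuousLinearMap.coe_snd', ← hy] at hfst hsnd
  exact ⟨hfst ▸ y.2, by simp [hfst, hsnd]⟩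

lemma IsClosedOp.clm_comp_subtype_sub (hA : IsClosedOp D A) (L : X →L[ℂ] X) :
    IsClosedOp D ((L : X →ₗ[ℂ] X) ∘ₗ D.subtype - A) := by
  intro y a b hya hyb
  obtain ⟨ha, hAa⟩ := hA y a (L a - b) hya
    (by simpa using ((L.continuous.tendsto a).comp hya).sub hyb)
  exact ⟨ha, by simp [hAa]⟩

lemma IsClosedOp.exists_clm_inverse [CompleteSpace X] {T : D →ₗ[ℂ] X} (hT : IsClosedOp D T)
    (hbij : Bijective T) :
    ∃ R : X →L[ℂ] X, ∃ hR : ∀ z, R z ∈ D, (∀ z, T ⟨R z, hR z⟩ = z) ∧ ∀ y, R (T y) = y := by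
  set e := LinearEquiv.ofBijective T hbij
  set R : X →ₗ[ℂ] X := D.subtype ∘ₗ e.symm.toLinearMap
  have hR : Continuous R := R.continuous_of_seq_closed_graph fun u z w hu hRu => by
    obtain ⟨hw, hTw⟩ := hT (fun m => e.symm (u m)) w z hRu (by simpa [e] using hu)
    simp [R, e, ← hTw]
  exact ⟨⟨R, hR⟩, fun z => (e.symm z).2, fun z => e.apply_symm_apply z, fun y => by simp [R, e]⟩

end ClosedOperators

section CharacteristicOperator

variable {X : Type*} [NormedAddCommGroup X] [NormedSpace ℂ X] {D : Submodule ℂ X}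
  {A : D →ₗ[ℂ] X} {B : X →L[ℂ] X} {n : ℕ} {r : Fin n → ℝ} {k : ℤ} {p : ℝ≥0∞}

variable (D A B r k) in
/-- The paper's `Δ_k = ik - A - Σ_j e^{-ikr_j} B`, with domain `D(A)`. -/
def charOperator : D →ₗ[ℂ] X :=
  (((I * k) • 1 - ∑ j, Complex.exp (-I * k * r j) • B : X →L[ℂ] X) : X →ₗ[ℂ] X) ∘ₗ D.subtype - A

lemma charOperator_apply (y : D) :
    charOperator D A B r k y
      = (I * k) • (y : X) - A y - ∑ j, Complex.exp (-I * k * r j) • B y := by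
  simp [charOperator, sub_right_comm]

lemma IsClosedOp.charOperator (hA : IsClosedOp D A) : IsClosedOp D (charOperator D A B r k) :=
  hA.clm_comp_subtype_sub _

variable (p) in
lemma isStrongSolution_exp_smul [CompleteSpace X] (y : D) :
    IsStrongSolution p D A B r (fun t : ℝ => Complex.exp (I * k * t) • charOperator D A B r k y)
      (fun t : ℝ => Complex.exp (I * k * t) • (y : X)) := by
  refine ⟨periodicLp_exp_smul p k (y : X), fun t => Complex.exp (I * k * t) • ((I * k) • (y : X)),
    periodicLp_exp_smul p k _, fun m => ?_, .of_forall fun t => ⟨D.smul_mem _ y.2, ?_⟩⟩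
  · simp only [fourierCoef_exp_smul]
    split_ifs with h <;> simp [h]
  · have hdelay : ∀ j, B (Complex.exp (I * k * ((t - r j : ℝ) : ℂ)) • (y : X))
        = Complex.exp (I * k * t) • Complex.exp (-I * k * r j) • B y := fun j => by
      rw [B.map_smul, smul_smul, ← Complex.exp_add]
      push_cast
      ring_nf
    simp only [hdelay, charOperator_apply, ← Finset.smul_sum]
    rw [show (⟨_, D.smul_mem _ y.2⟩ : D) = Complex.exp (I * k * t) • y from rfl, A.map_smul,
      ← smul_add, ← smul_add]
    congr 1
    abel

lemma charOperator_injective [CompleteSpace X]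
    (huniq : ∀ f x₁ x₂, PeriodicLp p f → IsStrongSolution p D A B r f x₁ →
      IsStrongSolution p D A B r f x₂ → x₁ =ᵐ[μT] x₂) :
    Injective (charOperator D A B r k) := by
  intro y₁ y₂ h
  have hsol₂ := isStrongSolution_exp_smul (A := A) (B := B) (r := r) (k := k) p y₂
  rw [← h] at hsol₂
  have hae := huniq _ _ _ (periodicLp_exp_smul p k _) (isStrongSolution_exp_smul p y₁) hsol₂
  have : (ae μT).NeBot := ae_restrict_neBot.2 (by simp [Real.pi_pos])
  obtain ⟨t, ht⟩ := hae.exists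
  exact Subtype.ext (smul_right_injective X (Complex.exp_ne_zero _) ht)

lemma IsStrongSolution.charOperator_fourierCoef [CompleteSpace X] (hA : IsClosedOp D A)
    (hp : 1 ≤ p) {f x : ℝ → X} (hf : PeriodicLp p f) (hx : IsStrongSolution p D A B r f x) (k : ℤ) :
    ∃ h : fourierCoef x k ∈ D, charOperator D A B r k ⟨fourierCoef x k, h⟩ = fourierCoef f k := by
  obtain ⟨hxp, v, hvp, hv, heq⟩ := hx
  have hdelay (j : Fin n) : IntervalIntegrable (fun t => x (t - r j)) volume 0 (2 * π) := by
    simpa using (hxp.intervalIntegrable hp (-r j) (2 * π - r j)).comp_sub_right (r j)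
  have hBdelay (j : Fin n) : IntervalIntegrable (fun t => B (x (t - r j))) volume 0 (2 * π) :=
    ⟨B.integrable_comp (hdelay j).1, B.integrable_comp (hdelay j).2⟩
  have hsum : IntervalIntegrable (fun t => ∑ j, B (x (t - r j))) volume 0 (2 * π) := by
    simpa only [← Finset.sum_fn] using IntervalIntegrable.sum Finset.univ fun j _ => hBdelay j
  have hvsum := (hvp.intervalIntegrable hp 0 (2 * π)).sub hsum
  have hg := hvsum.sub (hf.intervalIntegrable hp 0 (2 * π))
  obtain ⟨hk, hAk⟩ := hA.fourierCoef_mem (hxp.intervalIntegrable hp 0 (2 * π)) hg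
    (heq.mono fun t ⟨h, ht⟩ => ⟨h, by rw [ht]; abel⟩) k
  refine ⟨hk, ?_⟩
  have hshift (j : Fin n) : fourierCoef (fun t => B (x (t - r j))) k
      = Complex.exp (-I * k * r j) • B (fourierCoef x k) := by
    rw [B.fourierCoef_comp_comm (hdelay j), hxp.1.fourierCoef_comp_sub, B.map_smul]
  rw [charOperator_apply, hAk, fourierCoef_sub hvsum (hf.intervalIntegrable hp 0 (2 * π)),
    fourierCoef_sub (hvp.intervalIntegrable hp 0 (2 * π)) hsum,
    fourierCoef_sum _ fun j _ => hBdelay j, hv]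
  simp only [hshift]
  abel

lemma charOperator_surjective [CompleteSpace X] (hA : IsClosedOp D A) (hp : 1 ≤ p)
    (hex : ∀ f, PeriodicLp p f → ∃ x, IsStrongSolution p D A B r f x) :
    Surjective (charOperator D A B r k) := fun z => by
  obtain ⟨x, hx⟩ := hex _ (periodicLp_exp_smul p k z)
  obtain ⟨h, hxk⟩ := hx.charOperator_fourierCoef hA hp (periodicLp_exp_smul p k z) k
  exact ⟨_, by simpa [fourierCoef_exp_smul] using hxk⟩

end CharacteristicOperator

theorem solvability_implies_invertible_general {X : Type*}
    [NormedAddCommGroup X] [NormedSpace ℂ X] [CompleteSpace X]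
    (p : ℝ≥0∞) (hp1 : 1 ≤ p)
    (D : Submodule ℂ X) (A : D →ₗ[ℂ] X) (hA : IsClosedOp D A)
    (B : X →L[ℂ] X) (n : ℕ) (r : Fin n → ℝ)
    (hsol : ∀ f : ℝ → X, PeriodicLp p f →
      ∃ x : ℝ → X, IsStrongSolution p D A B r f x ∧
        ∀ y : ℝ → X, IsStrongSolution p D A B r f y →
          y =ᵐ[MeasureTheory.volume.restrict (Set.Ioc 0 (2 * Real.pi))] x)
    (k : ℤ) :
    ∃ R : X →L[ℂ] X, ∃ hR : ∀ z : X, R z ∈ D,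
      (∀ z : X, (Complex.I * (k : ℂ)) • R z - A ⟨R z, hR z⟩
        - ∑ j, Complex.exp (-Complex.I * (k : ℂ) * (r j : ℂ)) • B (R z) = z) ∧
      (∀ y : D, R ((Complex.I * (k : ℂ)) • (y : X) - A y
        - ∑ j, Complex.exp (-Complex.I * (k : ℂ) * (r j : ℂ)) • B (y : X)) = (y : X)) := by
  have hex : ∀ f, PeriodicLp p f → ∃ x, IsStrongSolution p D A B r f x :=
    fun f hf => (hsol f hf).imp fun _ hx => hx.1
  have huniq : ∀ f x₁ x₂, PeriodicLp p f → IsStrongSolution p D A B r f x₁ →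
      IsStrongSolution p D A B r f x₂ → x₁ =ᵐ[μT] x₂ := fun f x₁ x₂ hf h₁ h₂ => by
    obtain ⟨x, -, hx⟩ := hsol f hf
    exact (hx x₁ h₁).trans (hx x₂ h₂).symm
  obtain ⟨R, hR, hRright, hRleft⟩ :=
    (hA.charOperator (B := B) (r := r) (k := k)).exists_clm_inverse
      ⟨charOperator_injective huniq, charOperator_surjective hA hp1 hex⟩
  exact ⟨R, hR, fun z => by simpa only [charOperator_apply] using hRright z,
    fun y => by simpa only [charOperator_apply] using hRleft y⟩

/-- If for every `f ∈ L^p(𝕋; X)` there is a unique `2π`-periodic strong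
`L^p`-solution of `x′ = Ax + Σ_j Bx(· - r_j) + f`, then for every `k ∈ ℤ` the operator
`Δ_k = ikI - A - Σ_j e^{-ikr_j} B : D(A) → X` is bijective with bounded inverse. -/
theorem solvability_implies_invertible {X : Type*}
    [NormedAddCommGroup X] [NormedSpace ℂ X] [CompleteSpace X]
    (p : ℝ≥0∞) (hp1 : 1 ≤ p) (hp2 : p < ⊤)
    (D : Submodule ℂ X) (A : D →ₗ[ℂ] X) (hA : IsClosedOp D A)
    (B : X →L[ℂ] X) (n : ℕ) (r : Fin n → ℝ)
    (hsol : ∀ f : ℝ → X, PeriodicLp p f →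
      ∃ x : ℝ → X, IsStrongSolution p D A B r f x ∧
        ∀ y : ℝ → X, IsStrongSolution p D A B r f y →
          y =ᵐ[MeasureTheory.volume.restrict (Set.Ioc 0 (2 * Real.pi))] x)
    (k : ℤ) :
    ∃ R : X →L[ℂ] X, ∃ hR : ∀ z : X, R z ∈ D,
      (∀ z : X, (Complex.I * (k : ℂ)) • R z - A ⟨R z, hR z⟩
        - ∑ j, Complex.exp (-Complex.I * (k : ℂ) * (r j : ℂ)) • B (R z) = z) ∧
      (∀ y : D, R ((Complex.I * (k : ℂ)) • (y : X) - A y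
        - ∑ j, Complex.exp (-Complex.I * (k : ℂ) * (r j : ℂ)) • B (y : X)) = (y : X)) :=
  solvability_implies_invertible_general p hp1 D A hA B n r hsol k

end
end
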